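/- arXiv:2112.07537 — 7 statements merged into one kernel-verified Lean document; each statement's English description precedes it below -/
import Mathlib

section
/- Let h > 0 and let f : ℝ → ℝ be four times continuously differentiable on the interval [x - h, x + 2h]. Then |f(x + h/2) - ( -(1/16)·f(x - h) + (9/16)·f(x) + (9/16)·f(x + h) - (1/16)·f(x + 2h) )| ≤ (3/128)·h⁴·sup_{t ∈ [x-h, x+2h]} |f⁽⁴⁾(t)|. (Detail-coefficient bound of order h^N with N = 4 for the fourth-order interpolating wavelet.) -/
/-!
Let `P` be the quartic interpolating `f` at the five nodes `x - h, x, x + h/2, x + h, x + 2h`.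
The detail functional sees `f` only at these nodes and annihilates cubics, so its value on `f`
equals its value on `P`, namely `(9/16) h⁴` times the coefficient of `X⁴` in `P`; here `(9/16) h⁴`
is the node polynomial `(t - (x-h)) (t - x) (t - (x+h)) (t - (x+2h))` at `t = x + h/2`.
Since `f - P` vanishes at five points, Rolle's theorem applied four times gives `ξ` with
`f⁽⁴⁾(ξ) = 4! · P.coeff 4`, whence the bound with constant `(9/16) / 24 = 3/128`.
-/
open Set Polynomial
open scoped Nat

theorem Polynomial.contDiff_eval {𝕜 : Type*} [NontriviallyNormedField 𝕜] (P : 𝕜[X])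
    (n : WithTop ℕ∞) : ContDiff 𝕜 n fun x => P.eval x := by
  simpa only [aeval_def, Algebra.algebraMap_self, eval₂_id] using P.contDiff_aeval (𝕜 := 𝕜) n

theorem Polynomial.iteratedDeriv_eval {𝕜 : Type*} [NontriviallyNormedField 𝕜] (P : 𝕜[X])
    (k : ℕ) : iteratedDeriv k (fun x => P.eval x) = fun x => (derivative^[k] P).eval x := by
  induction k generalizing P with
  | zero => simp
  | succ k ih =>
    have hderiv : deriv (fun x => P.eval x) = fun x => P.derivative.eval x := by
      ext x; exact P.deriv
    rw [iteratedDeriv_succ', hderiv, ih, Function.iterate_succ_apply]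

theorem Polynomial.iterate_derivative_of_natDegree_le {R : Type*} [Semiring R] {P : R[X]}
    {n : ℕ} (hP : P.natDegree ≤ n) : derivative^[n] P = C (n ! * P.coeff n) := by
  rw [eq_C_of_natDegree_le_zero ((natDegree_iterate_derivative P n).trans (by omega)),
    coeff_iterate_derivative, zero_add, Nat.descFactorial_self, nsmul_eq_mul]

theorem Lagrange.exists_natDegree_le_eval_eq {F : Type*} [Field F] {n : ℕ}
    {p : Fin (n + 1) → F} (hp : Function.Injective p) (r : Fin (n + 1) → F) :
    ∃ P : F[X], P.natDegree ≤ n ∧ ∀ i, P.eval (p i) = r i := by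
  refine ⟨interpolate Finset.univ p r, ?_,
    fun i => eval_interpolate_at_node r hp.injOn (Finset.mem_univ i)⟩
  have := degree_interpolate_le (r := r) (s := Finset.univ) hp.injOn
  rw [Finset.card_univ, Fintype.card_fin, Nat.add_sub_cancel] at this
  exact natDegree_le_iff_degree_le.2 this

theorem IsCompact.le_biSup_of_continuousOn {α : Type*} [TopologicalSpace α] {s : Set α}
    {F : α → ℝ} (hs : IsCompact s) (hF : ContinuousOn F s) {w : α} (hw : w ∈ s) :
    F w ≤ ⨆ t ∈ s, F t := by
  obtain ⟨M, hM⟩ := hs.bddAbove_image hF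
  refine le_ciSup₂ (f := fun t (_ : t ∈ s) => F t) ⟨M, ?_⟩ w hw
  rintro _ ⟨_, ⟨t, rfl⟩, ⟨ht, rfl⟩⟩
  exact hM ⟨t, ht, rfl⟩

theorem exists_mem_Ioo_iteratedDeriv_eq_zero {n : ℕ} {g : ℝ → ℝ} {p : Fin (n + 2) → ℝ}
    (hp : StrictMono p) (hg : ContDiffOn ℝ (n + 1 : ℕ) g (Icc (p 0) (p (Fin.last _))))
    (hz : ∀ i, g (p i) = 0) :
    ∃ ξ ∈ Ioo (p 0) (p (Fin.last _)), iteratedDeriv (n + 1) g ξ = 0 := by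
  induction n generalizing g with
  | zero =>
    rw [iteratedDeriv_one]
    exact exists_deriv_eq_zero (hp (by decide)) hg.continuousOn ((hz 0).trans (hz _).symm)
  | succ n ih =>
    have hsub : ∀ i : Fin (n + 2), Icc (p i.castSucc) (p i.succ) ⊆ Icc (p 0) (p (Fin.last _)) :=
      fun i => Icc_subset_Icc (hp.monotone (Fin.zero_le _)) (hp.monotone (Fin.le_last _))
    choose q hq hgq using fun i : Fin (n + 2) =>
      exists_deriv_eq_zero (hp i.castSucc_lt_succ) (hg.continuousOn.mono (hsub i))
        ((hz _).trans (hz _).symm)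
    have hq_mono : StrictMono q := Fin.strictMono_iff_lt_succ.2 fun i =>
      (hq _).2.trans <| (Fin.succ_castSucc i ▸ (hq i.succ).1)
    have hq_range : Icc (q 0) (q (Fin.last _)) ⊆ Ioo (p 0) (p (Fin.last _)) :=
      Icc_subset_Ioo (hq 0).1 ((hq _).2)
    have hg' : ContDiffOn ℝ (n + 1 : ℕ) (deriv g) (Icc (q 0) (q (Fin.last _))) :=
      ((hg.mono Ioo_subset_Icc_self).deriv_of_isOpen isOpen_Ioo (by norm_cast)).mono hq_range
    obtain ⟨ξ, hξ, hgξ⟩ := ih hq_mono hg' hgq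
    exact ⟨ξ, hq_range (Ioo_subset_Icc_self hξ), by rwa [iteratedDeriv_succ']⟩

theorem exists_iteratedDerivWithin_eq_factorial_mul_coeff {n : ℕ} {f : ℝ → ℝ} {P : ℝ[X]}
    {p : Fin (n + 2) → ℝ} (hp : StrictMono p) (hP : P.natDegree ≤ n + 1)
    (hf : ContDiffOn ℝ (n + 1 : ℕ) f (Icc (p 0) (p (Fin.last _))))
    (hfP : ∀ i, f (p i) = P.eval (p i)) :
    ∃ ξ ∈ Ioo (p 0) (p (Fin.last _)),
      iteratedDerivWithin (n + 1) f (Icc (p 0) (p (Fin.last _))) ξ =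
        (n + 1)! * P.coeff (n + 1) := by
  obtain ⟨ξ, hξ, hgξ⟩ := exists_mem_Ioo_iteratedDeriv_eq_zero hp
    (hf.sub (P.contDiff_eval _).contDiffOn) fun i => sub_eq_zero.2 (hfP i)
  have hfξ : ContDiffAt ℝ (n + 1 : ℕ) f ξ := hf.contDiffAt (Icc_mem_nhds hξ.1 hξ.2)
  rw [iteratedDeriv_fun_sub hfξ (P.contDiff_eval _).contDiffAt, P.iteratedDeriv_eval,
    iterate_derivative_of_natDegree_le hP] at hgξ
  simp only [eval_C, sub_eq_zero] at hgξ
  refine ⟨ξ, hξ, ?_⟩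
  rw [iteratedDerivWithin_eq_iteratedDeriv (uniqueDiffOn_Icc (hξ.1.trans hξ.2)) hfξ
    (Ioo_subset_Icc_self hξ), hgξ]

noncomputable def deslauriersDubucNodes (x h : ℝ) : Fin 5 → ℝ :=
  ![x - h, x, x + h / 2, x + h, x + 2 * h]

noncomputable def deslauriersDubucDetail (f : ℝ → ℝ) (x h : ℝ) : ℝ :=
  f (x + h / 2) -
    (-(1 / 16) * f (x - h) + (9 / 16) * f x + (9 / 16) * f (x + h) - (1 / 16) * f (x + 2 * h))

theorem deslauriersDubucNodes_strictMono {x h : ℝ} (hh : 0 < h) :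
    StrictMono (deslauriersDubucNodes x h) := by
  refine Fin.strictMono_iff_lt_succ.2 fun i => ?_
  fin_cases i <;> simp [deslauriersDubucNodes] <;> linarith

theorem deslauriersDubucDetail_congr {f g : ℝ → ℝ} {x h : ℝ}
    (hfg : ∀ i, f (deslauriersDubucNodes x h i) = g (deslauriersDubucNodes x h i)) :
    deslauriersDubucDetail f x h = deslauriersDubucDetail g x h := by
  have := hfg 0; have := hfg 1; have := hfg 2; have := hfg 3; have := hfg 4
  simp_all [deslauriersDubucDetail, deslauriersDubucNodes]

theorem deslauriersDubucDetail_eval {P : ℝ[X]} (hP : P.natDegree ≤ 4) (x h : ℝ) :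
    deslauriersDubucDetail (fun t => P.eval t) x h = 9 / 16 * h ^ 4 * P.coeff 4 := by
  simp only [deslauriersDubucDetail, eval_eq_sum_range' (Nat.lt_succ_of_le hP),
    Finset.sum_range_succ, Finset.sum_range_zero]
  ring

/-- Detail-coefficient bound of order `h^4` for the fourth-order interpolating
wavelet: the deviation of a sample at a dyadic midpoint from the `N = 4`
Deslauriers–Dubuc prediction is bounded by `(3/128) h⁴ sup |f⁽⁴⁾|`. -/
theorem detail_bound_order_four
    (f : ℝ → ℝ) (x h : ℝ) (hh : 0 < h)
    (hf : ContDiffOn ℝ 4 f (Set.Icc (x - h) (x + 2 * h))) :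
    |f (x + h / 2) -
        (-(1 / 16) * f (x - h) + (9 / 16) * f x + (9 / 16) * f (x + h)
          - (1 / 16) * f (x + 2 * h))| ≤
      (3 / 128) * h ^ 4 *
        ⨆ t ∈ Set.Icc (x - h) (x + 2 * h),
          |iteratedDerivWithin 4 f (Set.Icc (x - h) (x + 2 * h)) t| := by
  have hnodes := deslauriersDubucNodes_strictMono (x := x) hh
  obtain ⟨P, hPdeg, hPeval⟩ :=
    Lagrange.exists_natDegree_le_eval_eq hnodes.injective (f ∘ deslauriersDubucNodes x h)
  obtain ⟨ξ, hξ, hfξ⟩ := exists_iteratedDerivWithin_eq_factorial_mul_coeff (n := 3) hnodes hPdeg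
    hf fun i => (hPeval i).symm
  have hnode_ends : deslauriersDubucNodes x h 0 = x - h ∧
      deslauriersDubucNodes x h (Fin.last 4) = x + 2 * h := ⟨rfl, rfl⟩
  rw [hnode_ends.1, hnode_ends.2] at hξ hfξ
  have hdetail : deslauriersDubucDetail f x h =
      3 / 128 * h ^ 4 * iteratedDerivWithin 4 f (Icc (x - h) (x + 2 * h)) ξ := by
    rw [deslauriersDubucDetail_congr (g := fun t => P.eval t) fun i => (hPeval i).symm,
      deslauriersDubucDetail_eval hPdeg, hfξ]
    norm_num [Nat.factorial]
    ring
  change |deslauriersDubucDetail f x h| ≤ _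
  rw [hdetail, abs_mul, abs_of_pos (by positivity)]
  refine mul_le_mul_of_nonneg_left ?_ (by positivity)
  exact isCompact_Icc.le_biSup_of_continuousOn
    (hf.continuousOn_iteratedDerivWithin le_rfl (uniqueDiffOn_Icc (by linarith))).abs
    (Ioo_subset_Icc_self hξ)
end

section
/- Let s̃, s : ℤ → ℝ be finitely supported filters, let λ : ℤ → ℝ, and define the detail coefficients γ(m) = λ(2m+1) + Σ_{i∈ℤ} s̃(i)·λ(2(m+i)) and coarse coefficients λ'(k) = λ(2k) + Σ_{i∈ℤ} s(i)·γ(k-i). Suppose ε ≥ 0 and |γ(m)| ≤ ε for all m ∈ ℤ. Let λ̂ be the synthesis from λ' with all details set to zero, i.e. λ̂(2k) = λ'(k) and λ̂(2m+1) = -Σ_{i∈ℤ} s̃(i)·λ̂(2(m+i)). Then for all j ∈ ℤ, |λ̂(j) - λ(j)| ≤ (1 + ‖s‖₁ + ‖s̃‖₁·‖s‖₁)·ε, where ‖s‖₁ = Σ_{i∈ℤ} |s(i)| and ‖s̃‖₁ = Σ_{i∈ℤ} |s̃(i)|. (Discrete one-level compression error control: discarding all detail coefficients below a threshold ε changes the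 signal by at most a constant times ε in the supremum norm.) -/
/-!
Write `e = lamhat - lam` for the reconstruction error. On even samples the update step gives
`e (2k) = ∑ s i γ (k - i)`, so `|e (2k)| ≤ ‖s‖₁ ε`. On odd samples both `lamhat` and `lam` satisfy
the inverse prediction step, `lamhat` with zero details and `lam` with details `γ`, so
`e (2m+1) = -(γ m + ∑ s̃ i e (2(m+i)))`, and the even bound gives `|e (2m+1)| ≤ ε + ‖s̃‖₁ ‖s‖₁ ε`.
-/

open Function

section FiniteFilter

variable {ι : Type*} {f : ι → ℝ}

theorem finsum_mul_sub (hf : (support f).Finite) (g h : ι → ℝ) :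
    ∑ᶠ i, f i * (g i - h i) = ∑ᶠ i, f i * g i - ∑ᶠ i, f i * h i := by
  simp_rw [mul_sub]
  exact finsum_sub_distrib (hf.subset (support_mul_subset_left f g))
    (hf.subset (support_mul_subset_left f h))

theorem abs_finsum_mul_le (hf : (support f).Finite) {g : ι → ℝ} {C : ℝ}
    (hg : ∀ i, |g i| ≤ C) : |∑ᶠ i, f i * g i| ≤ (∑ᶠ i, |f i|) * C := by
  have hsupp : ∀ {u : ι → ℝ}, support u ⊆ support f → support u ⊆ hf.toFinset := fun h => by
    rwa [Set.Finite.coe_toFinset]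
  rw [finsum_eq_finsetSum_of_support_subset _ (hsupp (support_mul_subset_left f g)),
    finsum_eq_finsetSum_of_support_subset (fun i => |f i|)
      (hsupp (support_comp_subset abs_zero f)), Finset.sum_mul]
  calc |∑ i ∈ hf.toFinset, f i * g i| ≤ ∑ i ∈ hf.toFinset, |f i * g i| :=
        Finset.abs_sum_le_sum_abs _ _
    _ ≤ ∑ i ∈ hf.toFinset, |f i| * C := Finset.sum_le_sum fun i _ => by
        rw [abs_mul]
        exact mul_le_mul_of_nonneg_left (hg i) (abs_nonneg _)

end FiniteFilter

theorem lifting_scheme_compression_error_control_general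
    (stilde s : ℤ → ℝ)
    (hstilde : (Function.support stilde).Finite)
    (hs : (Function.support s).Finite)
    (lam : ℤ → ℝ)
    (γ : ℤ → ℝ)
    (hγ : ∀ m : ℤ, γ m = lam (2 * m + 1) + ∑ᶠ i : ℤ, stilde i * lam (2 * (m + i)))
    (lam' : ℤ → ℝ)
    (hlam' : ∀ k : ℤ, lam' k = lam (2 * k) + ∑ᶠ i : ℤ, s i * γ (k - i))
    (ε : ℝ)
    (hγsmall : ∀ m : ℤ, |γ m| ≤ ε)
    (lamhat : ℤ → ℝ)
    (hhat_even : ∀ k : ℤ, lamhat (2 * k) = lam' k)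
    (hhat_odd : ∀ m : ℤ, lamhat (2 * m + 1) = -∑ᶠ i : ℤ, stilde i * lamhat (2 * (m + i))) :
    ∀ j : ℤ, |lamhat j - lam j| ≤
      (1 + (∑ᶠ i : ℤ, |s i|) + (∑ᶠ i : ℤ, |stilde i|) * (∑ᶠ i : ℤ, |s i|)) * ε := by
  set S := ∑ᶠ i : ℤ, |s i|
  set T := ∑ᶠ i : ℤ, |stilde i|
  have hε : 0 ≤ ε := (abs_nonneg _).trans (hγsmall 0)
  have hS : 0 ≤ S := finsum_nonneg fun _ => abs_nonneg _
  have hT : 0 ≤ T := finsum_nonneg fun _ => abs_nonneg _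
  have even_error : ∀ k, |lamhat (2 * k) - lam (2 * k)| ≤ S * ε := fun k => by
    rw [hhat_even, hlam', add_sub_cancel_left]
    exact abs_finsum_mul_le hs fun _ => hγsmall _
  have odd_error : ∀ m, lamhat (2 * m + 1) - lam (2 * m + 1) =
      -(γ m + ∑ᶠ i, stilde i * (lamhat (2 * (m + i)) - lam (2 * (m + i)))) := fun m => by
    rw [finsum_mul_sub hstilde, hhat_odd, hγ]
    ring
  intro j
  obtain ⟨m, rfl | rfl⟩ := Int.even_or_odd' j
  · calc |lamhat (2 * m) - lam (2 * m)| ≤ S * ε := even_error m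
      _ ≤ (1 + S + T * S) * ε := by nlinarith [mul_nonneg (mul_nonneg hT hS) hε]
  · calc |lamhat (2 * m + 1) - lam (2 * m + 1)|
        ≤ |γ m| + |∑ᶠ i, stilde i * (lamhat (2 * (m + i)) - lam (2 * (m + i)))| := by
          rw [odd_error, abs_neg]
          exact abs_add_le _ _
      _ ≤ ε + T * (S * ε) :=
          add_le_add (hγsmall m) (abs_finsum_mul_le hstilde fun i => even_error (m + i))
      _ ≤ (1 + S + T * S) * ε := by nlinarith [mul_nonneg hS hε]

/-- Discrete one-level compression error control for the lifting scheme: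
discarding all detail coefficients below a threshold `ε` changes the signal by
at most `(1 + ‖s‖₁ + ‖s̃‖₁·‖s‖₁)·ε` in the supremum norm. -/
theorem lifting_scheme_compression_error_control
    (stilde s : ℤ → ℝ)
    (hstilde : (Function.support stilde).Finite)
    (hs : (Function.support s).Finite)
    (lam : ℤ → ℝ)
    (γ : ℤ → ℝ)
    (hγ : ∀ m : ℤ, γ m = lam (2 * m + 1) + ∑ᶠ i : ℤ, stilde i * lam (2 * (m + i)))
    (lam' : ℤ → ℝ)
    (hlam' : ∀ k : ℤ, lam' k = lam (2 * k) + ∑ᶠ i : ℤ, s i * γ (k - i))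
    (ε : ℝ) (hε : 0 ≤ ε)
    (hγsmall : ∀ m : ℤ, |γ m| ≤ ε)
    (lamhat : ℤ → ℝ)
    (hhat_even : ∀ k : ℤ, lamhat (2 * k) = lam' k)
    (hhat_odd : ∀ m : ℤ, lamhat (2 * m + 1) = -∑ᶠ i : ℤ, stilde i * lamhat (2 * (m + i))) :
    ∀ j : ℤ, |lamhat j - lam j| ≤
      (1 + (∑ᶠ i : ℤ, |s i|) + (∑ᶠ i : ℤ, |stilde i|) * (∑ᶠ i : ℤ, |s i|)) * ε :=
  lifting_scheme_compression_error_control_general stilde s hstilde hs lam γ hγ lam' hlam' ε hγsmall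
    lamhat hhat_even hhat_odd
end

section
/- Let λ : ℤ → ℝ be finitely supported and let λ' be its coarse scaling coefficients under the 2.2 forward wavelet transform. Then Σ_{j∈ℤ} λ(j) = 2·Σ_{k∈ℤ} λ'(k). (Conservation of the zeroth discrete moment across levels by the lifted second-order interpolating wavelet.) -/
/-!
Write `E` and `O` for the sums of the even and odd samples of `λ`, so `∑ λ = E + O`.
Both even neighbours `λ(2m)` and `λ(2m+2)` of `λ(2m+1)` sum to `E` over `m`, hence `∑ γ = O - E`.
Every `γ(k)` enters `λ'` twice with weight `1/4`, so `∑ λ' = E + (O - E) / 2 = (E + O) / 2`.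
-/

open Set

section

variable {M : Type*} [AddCommMonoid M]

theorem finsum_comp_add_right {G : Type*} [AddGroup G] (f : G → M) (c : G) :
    ∑ᶠ k, f (k + c) = ∑ᶠ k, f k :=
  finsum_comp_equiv (Equiv.addRight c)

theorem finsum_comp_sub_right {G : Type*} [AddGroup G] (f : G → M) (c : G) :
    ∑ᶠ k, f (k - c) = ∑ᶠ k, f k :=
  finsum_comp_equiv (Equiv.subRight c)

theorem finsum_comp_two_mul_add_two (f : ℤ → M) : ∑ᶠ k, f (2 * k + 2) = ∑ᶠ k, f (2 * k) := by
  simpa only [mul_add, mul_one] using finsum_comp_add_right (fun k => f (2 * k)) 1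

theorem Function.HasFiniteSupport.comp_two_mul {f : ℤ → M} (hf : f.HasFiniteSupport) :
    (fun k => f (2 * k)).HasFiniteSupport :=
  hf.fun_comp_of_injective (mul_right_injective₀ two_ne_zero)

theorem Function.HasFiniteSupport.comp_two_mul_add {f : ℤ → M} (hf : f.HasFiniteSupport)
    {c : ℤ} : (fun k => f (2 * k + c)).HasFiniteSupport :=
  hf.fun_comp_of_injective ((add_left_injective c).comp (mul_right_injective₀ two_ne_zero))

theorem finsum_eq_finsum_even_add_finsum_odd {f : ℤ → M} (hf : f.HasFiniteSupport) :
    ∑ᶠ j, f j = ∑ᶠ k, f (2 * k) + ∑ᶠ k, f (2 * k + 1) := by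
  have hdisj : Disjoint (range fun k : ℤ => 2 * k) (range fun k : ℤ => 2 * k + 1) := by
    rw [Set.disjoint_left]
    rintro _ ⟨a, rfl⟩ ⟨b, hb : 2 * b + 1 = 2 * a⟩
    omega
  have hcover : (range fun k : ℤ => 2 * k) ∪ (range fun k : ℤ => 2 * k + 1) = univ := by
    refine eq_univ_of_forall fun j => ?_
    rcases Int.even_or_odd' j with ⟨k, rfl | rfl⟩
    exacts [Or.inl ⟨k, rfl⟩, Or.inr ⟨k, rfl⟩]
  rw [← finsum_mem_univ f, ← hcover,
    finsum_mem_union' hdisj (hf.inter_of_right _) (hf.inter_of_right _),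
    finsum_mem_range (fun a b h => by omega), finsum_mem_range (fun a b h => by omega)]

end

section

variable {K : Type*} [Field K]

def wavelet22Detail (lam : ℤ → K) (m : ℤ) : K :=
  lam (2 * m + 1) - (1 / 2) * (lam (2 * m) + lam (2 * m + 2))

def wavelet22Coarse (lam : ℤ → K) (k : ℤ) : K :=
  lam (2 * k) + (1 / 4) * (wavelet22Detail lam (k - 1) + wavelet22Detail lam k)

variable {lam : ℤ → K}

theorem Function.HasFiniteSupport.wavelet22Detail (hlam : lam.HasFiniteSupport) :
    (wavelet22Detail lam).HasFiniteSupport :=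
  hlam.comp_two_mul_add.fun_sub ((hlam.comp_two_mul.fun_add hlam.comp_two_mul_add).fun_mul_right _)

variable [CharZero K]

theorem finsum_wavelet22Detail (hlam : lam.HasFiniteSupport) :
    ∑ᶠ m, wavelet22Detail lam m = ∑ᶠ k, lam (2 * k + 1) - ∑ᶠ k, lam (2 * k) := by
  have heven : (fun k => lam (2 * k)).HasFiniteSupport := hlam.comp_two_mul
  have hodd : (fun k => lam (2 * k + 1)).HasFiniteSupport := hlam.comp_two_mul_add
  have heven' : (fun k => lam (2 * k + 2)).HasFiniteSupport := hlam.comp_two_mul_add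
  have hmean := heven.fun_add heven'
  simp only [wavelet22Detail]
  rw [finsum_sub_distrib hodd (hmean.fun_mul_right _), ← mul_finsum' _ _ hmean,
    finsum_add_distrib heven heven', finsum_comp_two_mul_add_two]
  ring

theorem finsum_wavelet22Coarse (hlam : lam.HasFiniteSupport) :
    ∑ᶠ k, wavelet22Coarse lam k = (∑ᶠ k, lam (2 * k) + ∑ᶠ k, lam (2 * k + 1)) / 2 := by
  have hdetail := hlam.wavelet22Detail
  have hprev : (fun k => wavelet22Detail lam (k - 1)).HasFiniteSupport :=
    hdetail.fun_comp_of_injective (sub_left_injective (b := 1))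
  have hlift := hprev.fun_add hdetail
  simp only [wavelet22Coarse]
  rw [finsum_add_distrib hlam.comp_two_mul (hlift.fun_mul_right _), ← mul_finsum' _ _ hlift,
    finsum_add_distrib hprev hdetail, finsum_comp_sub_right, finsum_wavelet22Detail hlam]
  ring

end

/-- Conservation of the zeroth discrete moment across levels by the lifted
second-order (2.2) interpolating wavelet. -/
theorem wavelet_2_2_conserves_zeroth_moment
    (lam : ℤ → ℝ) (hfin : (Function.support lam).Finite)
    (γ : ℤ → ℝ)
    (hγ : ∀ m : ℤ, γ m = lam (2 * m + 1) - (1 / 2) * (lam (2 * m) + lam (2 * m + 2)))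
    (lam' : ℤ → ℝ)
    (hlam' : ∀ k : ℤ, lam' k = lam (2 * k) + (1 / 4) * (γ (k - 1) + γ k)) :
    ∑ᶠ j : ℤ, lam j = 2 * ∑ᶠ k : ℤ, lam' k := by
  obtain rfl : γ = wavelet22Detail lam := funext hγ
  obtain rfl : lam' = wavelet22Coarse lam := funext hlam'
  rw [finsum_eq_finsum_even_add_finsum_odd hfin, finsum_wavelet22Coarse hfin]
  ring
end

section
/- Let λ : ℤ → ℝ be finitely supported and let λ' be its coarse scaling coefficients under the 2.2 forward wavelet transform. Then Σ_{j∈ℤ} j·λ(j) = 4·Σ_{k∈ℤ} k·λ'(k). (Conservation of the first discrete moment across levels by the lifted second-order interpolating wavelet: with grid coordinates x_{L+1,j} = j·2^{-(L+1)} on the fine level and x_{L,k} = k·2^{-L} on the coarse level, this is Σ_j λ(j)·x_{L+1,j} = 2·Σ_k λ'(k)·x_{L,k}.) -/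
/-!
Both lifting steps are summations by parts,
`∑ c k * (g k + g (k + d)) = ∑ (c k + c (k - d)) * g k`. For the update step this gives
`∑ k λ'(k) = ∑ k λ(2k) + ¼ ∑ (2k+1) γ(k)`. For the prediction step, the weights `2k ± 1` of the
two odd neighbours of `2k` average to `2k`, so `∑ (2k+1) γ(k) = ∑ (2k+1) λ(2k+1) - ∑ 2k λ(2k)`.
Splitting `∑ j λ(j)` into even and odd `j` yields the claim.
-/

open Function

theorem finsum_int_eq_finsum_even_add_finsum_odd {M : Type*} [AddCommMonoid M] {f : ℤ → M}
    (hf : HasFiniteSupport f) :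
    ∑ᶠ j, f j = ∑ᶠ k, f (2 * k) + ∑ᶠ k, f (2 * k + 1) := by
  have hcover : Set.range (2 * ·) ∪ Set.range (2 * · + 1) = (Set.univ : Set ℤ) := by
    refine Set.eq_univ_of_forall fun n => ?_
    obtain ⟨k, rfl | rfl⟩ := Int.even_or_odd' n
    exacts [Or.inl ⟨k, rfl⟩, Or.inr ⟨k, rfl⟩]
  have hdisj : Disjoint (Set.range (2 * · : ℤ → ℤ)) (Set.range (2 * · + 1)) := by
    refine Set.disjoint_left.2 ?_
    rintro _ ⟨a, rfl⟩ ⟨b, hb⟩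
    simp only at hb
    omega
  rw [← finsum_mem_univ f, ← hcover,
    finsum_mem_union' hdisj (hf.subset Set.inter_subset_right) (hf.subset Set.inter_subset_right),
    finsum_mem_range fun a b h => by omega, finsum_mem_range fun a b h => by omega]

theorem finsum_mul_add_comp_add {R : Type*} [Semiring R] (c : ℤ → R) {g : ℤ → R}
    (hg : HasFiniteSupport g) (d : ℤ) :
    ∑ᶠ k, c k * (g k + g (k + d)) = ∑ᶠ k, (c k + c (k - d)) * g k := by
  have hshift : ∑ᶠ k, c k * g (k + d) = ∑ᶠ k, c (k - d) * g k := by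
    conv_rhs => rw [← finsum_comp_equiv (Equiv.addRight d)]
    simp
  simp only [mul_add, add_mul]
  rw [finsum_add_distrib (by fun_prop)
      (by fun_prop (disch := intro a b h; beta_reduce at h; omega)),
    finsum_add_distrib (by fun_prop) (by fun_prop), hshift]

section Wavelet22

variable {lam γ : ℤ → ℝ}

theorem hasFiniteSupport_detail (hlam : HasFiniteSupport lam)
    (hγ : ∀ m : ℤ, γ m = lam (2 * m + 1) - (1 / 2) * (lam (2 * m) + lam (2 * m + 2))) :
    HasFiniteSupport γ := by
  rw [funext hγ]
  fun_prop (disch := intro a b h; beta_reduce at h; omega)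

theorem finsum_odd_mul_detail_eq (hlam : HasFiniteSupport lam)
    (hγ : ∀ m : ℤ, γ m = lam (2 * m + 1) - (1 / 2) * (lam (2 * m) + lam (2 * m + 2))) :
    ∑ᶠ k : ℤ, (2 * k + 1 : ℝ) * γ k
      = ∑ᶠ k : ℤ, (2 * k + 1 : ℝ) * lam (2 * k + 1) - 2 * ∑ᶠ k : ℤ, (k : ℝ) * lam (2 * k) := by
  have heven : HasFiniteSupport fun k : ℤ => lam (2 * k) := by
    fun_prop (disch := intro a b h; beta_reduce at h; omega)
  calc ∑ᶠ k : ℤ, (2 * k + 1 : ℝ) * γ k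
      = ∑ᶠ k : ℤ, ((2 * k + 1 : ℝ) * lam (2 * k + 1)
          - 1 / 2 * ((2 * k + 1 : ℝ) * (lam (2 * k) + lam (2 * (k + 1))))) := by
        refine finsum_congr fun k => ?_
        rw [hγ, mul_add_one]
        ring
    _ = ∑ᶠ k : ℤ, (2 * k + 1 : ℝ) * lam (2 * k + 1)
          - 1 / 2 * ∑ᶠ k : ℤ, ((2 * k + 1 : ℝ) + (2 * (k - 1 : ℤ) + 1)) * lam (2 * k) := by
        rw [finsum_sub_distrib (by fun_prop (disch := intro a b h; beta_reduce at h; omega))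
            (by fun_prop (disch := intro a b h; beta_reduce at h; omega)),
          ← mul_finsum, finsum_mul_add_comp_add (fun k : ℤ => (2 * k + 1 : ℝ)) heven 1]
    _ = _ := by
        rw [mul_finsum, mul_finsum]
        congr 1
        exact finsum_congr fun k => by push_cast; ring

theorem finsum_mul_coarse_eq (hlam : HasFiniteSupport lam) (hγ : HasFiniteSupport γ)
    {lam' : ℤ → ℝ} (hlam' : ∀ k : ℤ, lam' k = lam (2 * k) + (1 / 4) * (γ (k - 1) + γ k)) :
    ∑ᶠ k : ℤ, (k : ℝ) * lam' k
      = ∑ᶠ k : ℤ, (k : ℝ) * lam (2 * k) + 1 / 4 * ∑ᶠ k : ℤ, (2 * k + 1 : ℝ) * γ k := by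
  calc ∑ᶠ k : ℤ, (k : ℝ) * lam' k
      = ∑ᶠ k : ℤ, ((k : ℝ) * lam (2 * k) + 1 / 4 * ((k : ℝ) * (γ k + γ (k + -1)))) := by
        refine finsum_congr fun k => ?_
        rw [hlam', ← sub_eq_add_neg]
        ring
    _ = ∑ᶠ k : ℤ, (k : ℝ) * lam (2 * k)
          + 1 / 4 * ∑ᶠ k : ℤ, ((k : ℝ) + ((k - -1 : ℤ) : ℝ)) * γ k := by
        rw [finsum_add_distrib (by fun_prop (disch := intro a b h; beta_reduce at h; omega))
            (by fun_prop (disch := intro a b h; beta_reduce at h; omega)),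
          ← mul_finsum, finsum_mul_add_comp_add (fun k : ℤ => (k : ℝ)) hγ (-1)]
    _ = _ := by
        congr 2
        exact finsum_congr fun k => by push_cast; ring

end Wavelet22

/-- Conservation of the first discrete moment across levels by the lifted
second-order (2.2) interpolating wavelet. -/
theorem wavelet_2_2_conserves_first_moment
    (lam : ℤ → ℝ) (hfin : (Function.support lam).Finite)
    (γ : ℤ → ℝ)
    (hγ : ∀ m : ℤ, γ m = lam (2 * m + 1) - (1 / 2) * (lam (2 * m) + lam (2 * m + 2)))
    (lam' : ℤ → ℝ)
    (hlam' : ∀ k : ℤ, lam' k = lam (2 * k) + (1 / 4) * (γ (k - 1) + γ k)) :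
    ∑ᶠ j : ℤ, (j : ℝ) * lam j = 4 * ∑ᶠ k : ℤ, (k : ℝ) * lam' k := by
  have hlam : HasFiniteSupport lam := hfin
  rw [finsum_int_eq_finsum_even_add_finsum_odd (by fun_prop),
    finsum_mul_coarse_eq hlam (hasFiniteSupport_detail hlam hγ) hlam',
    finsum_odd_mul_detail_eq hlam hγ]
  push_cast
  simp only [mul_assoc, ← mul_finsum]
  ring
end

section
/- Let λ : ℤ → ℝ be finitely supported and let λ' be its coarse scaling coefficients under the 4.2 forward wavelet transform. Then Σ_{j∈ℤ} λ(j) = 2·Σ_{k∈ℤ} λ'(k). (Conservation of the zeroth discrete moment across levels by the lifted fourth-order interpolating wavelet.) -/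
/-!
The prediction stencil has total weight `1` on the odd samples and `-1` on the even ones, so
`∑ γ = ∑ λ(2k+1) - ∑ λ(2k)`. The update stencil has total weight `1/2`, so
`∑ λ' = ∑ λ(2k) + ∑ γ / 2`, which is half of `∑ λ = ∑ λ(2k) + ∑ λ(2k+1)`.
-/

open Function

section

variable {M : Type*} [AddCommMonoid M] [TopologicalSpace M]

theorem HasSum.comp_add_right {G : Type*} [AddGroup G] {f : G → M} {a : M} (h : HasSum f a)
    (c : G) : HasSum (fun g ↦ f (g + c)) a :=
  (Equiv.addRight c).hasSum_iff.2 h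

theorem HasSum.comp_sub_right {G : Type*} [AddGroup G] {f : G → M} {a : M} (h : HasSum f a)
    (c : G) : HasSum (fun g ↦ f (g - c)) a :=
  (Equiv.subRight c).hasSum_iff.2 h

theorem HasSum.int_even_add_odd [ContinuousAdd M] {f : ℤ → M} {a b : M}
    (he : HasSum (fun k ↦ f (2 * k)) a) (ho : HasSum (fun k ↦ f (2 * k + 1)) b) :
    HasSum f (a + b) := by
  have hmul := mul_right_injective₀ (two_ne_zero' ℤ)
  replace ho := ((add_left_injective 1).comp hmul).hasSum_range_iff.2 ho
  refine (hmul.hasSum_range_iff.2 he).add_isCompl ?_ ho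
  simpa [Function.comp_def] using Int.isCompl_even_odd

theorem HasSum.finsum_eq [T2Space M] {α : Type*} {f : α → M} {a : M} (h : HasSum f a)
    (hf : HasFiniteSupport f) : ∑ᶠ x, f x = a :=
  (tsum_eq_finsum hf).symm.trans h.tsum_eq

end

/-- Conservation of the zeroth discrete moment across levels by the lifted
fourth-order (4.2) interpolating wavelet. -/
theorem wavelet_4_2_conserves_zeroth_moment
    (lam : ℤ → ℝ) (hfin : (Function.support lam).Finite)
    (γ : ℤ → ℝ)
    (hγ : ∀ m : ℤ, γ m =
      lam (2 * m + 1) + (1 / 16) * lam (2 * m - 2) - (9 / 16) * lam (2 * m)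
        - (9 / 16) * lam (2 * m + 2) + (1 / 16) * lam (2 * m + 4))
    (lam' : ℤ → ℝ)
    (hlam' : ∀ k : ℤ, lam' k =
      lam (2 * k) - (1 / 32) * γ (k + 1) + (9 / 32) * γ k
        + (9 / 32) * γ (k - 1) - (1 / 32) * γ (k - 2)) :
    ∑ᶠ j : ℤ, lam j = 2 * ∑ᶠ k : ℤ, lam' k := by
  have hlam_fin : HasFiniteSupport lam := hfin
  have hγ_fin : HasFiniteSupport γ := by
    rw [funext hγ]
    fun_prop (disch := intro a b h; simp only at h; omega)
  have hlam'_fin : HasFiniteSupport lam' := by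
    rw [funext hlam']
    fun_prop (disch := intro a b h; simp only at h; omega)
  have hE : HasSum (fun k ↦ lam (2 * k)) (∑' k, lam (2 * k)) := by
    refine (summable_of_hasFiniteSupport ?_).hasSum
    fun_prop (disch := intro a b h; simp only at h; omega)
  have hA : HasSum (fun k ↦ lam (2 * k + 1)) (∑' k, lam (2 * k + 1)) := by
    refine (summable_of_hasFiniteSupport ?_).hasSum
    fun_prop (disch := intro a b h; simp only at h; omega)
  set E := ∑' k, lam (2 * k)
  set A := ∑' k, lam (2 * k + 1)
  have hγ_sum : HasSum γ (A - E) := by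
    rw [show A - E = A + 1 / 16 * E - 9 / 16 * E - 9 / 16 * E + 1 / 16 * E by ring]
    exact ((((hA.add ((hE.comp_sub_right 1).mul_left _)).sub (hE.mul_left _)).sub
      ((hE.comp_add_right 1).mul_left _)).add ((hE.comp_add_right 2).mul_left _)).congr_fun
      fun m ↦ by rw [hγ]; ring_nf
  have hlam'_sum : HasSum lam' (E + (A - E) / 2) := by
    rw [show E + (A - E) / 2 = E - 1 / 32 * (A - E) + 9 / 32 * (A - E) + 9 / 32 * (A - E)
      - 1 / 32 * (A - E) by ring]
    exact ((((hE.sub ((hγ_sum.comp_add_right 1).mul_left _)).add (hγ_sum.mul_left _)).add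
      ((hγ_sum.comp_sub_right 1).mul_left _)).sub
      ((hγ_sum.comp_sub_right 2).mul_left _)).congr_fun hlam'
  rw [(hE.int_even_add_odd hA).finsum_eq hlam_fin, hlam'_sum.finsum_eq hlam'_fin]
  ring
end

section
/- Let λ : ℤ → ℝ be finitely supported and let λ' be its coarse scaling coefficients under the 4.2 forward wavelet transform. Then Σ_{j∈ℤ} j·λ(j) = 4·Σ_{k∈ℤ} k·λ'(k). (Conservation of the first discrete moment across levels by the lifted fourth-order interpolating wavelet: with grid coordinates x_{L+1,j} = j·2^{-(L+1)} on the fine level and x_{L,k} = k·2^{-L} on the coarse level, this is Σ_j λ(j)·x_{L+1,j} = 2·Σ_k λ'(k)·x_{L,k}.) -/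
/-!
Split `λ` into `e m = λ (2m)` and `o m = λ (2m+1)`. Both lifting steps are four-tap stencils,
`γ = o + P e` and `λ' = e + U γ`, and summing a stencil against a weight moves the stencil onto
the weight, since each tap only shifts the summation index. For affine weights only the zeroth and
first moments of the stencil survive, which gives
`∑ (2m+1) γ m = ∑ (2m+1) o m - 2 ∑ m e m` and `4 ∑ k λ' k = 4 ∑ k e k + ∑ (2m+1) γ m`.
Adding them leaves `2 ∑ m e m + ∑ (2m+1) o m = ∑ j λ j`.
-/

open Function

section Stencil

variable {ι : Type*} [Fintype ι]

def stencil (c : ι → ℝ) (σ : ι → ℤ) (f : ℤ → ℝ) (k : ℤ) : ℝ :=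
  ∑ i, c i * f (k + σ i)

variable (c : ι → ℝ) (σ : ι → ℤ) {f : ℤ → ℝ}

lemma hasFiniteSupport_stencil (hf : f.HasFiniteSupport) : (stencil c σ f).HasFiniteSupport := by
  unfold stencil
  fun_prop (disch := exact add_left_injective _)

lemma finsum_mul_stencil (w : ℤ → ℝ) (hf : f.HasFiniteSupport) :
    ∑ᶠ k, w k * stencil c σ f k = ∑ᶠ k, (∑ i, c i * w (k - σ i)) * f k := by
  have hshift (i : ι) : (fun k => w k * (c i * f (k + σ i))).HasFiniteSupport := by
    fun_prop (disch := exact add_left_injective _)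
  calc ∑ᶠ k, w k * stencil c σ f k
      = ∑ i, ∑ᶠ k, w k * (c i * f (k + σ i)) := by
        simp only [stencil, Finset.mul_sum]
        exact finsum_sum_comm _ _ fun i _ => hshift i
    _ = ∑ i, ∑ᶠ k, w (k - σ i) * (c i * f k) := by
        refine Finset.sum_congr rfl fun i _ => ?_
        rw [← finsum_comp_equiv (Equiv.subRight (σ i))]
        simp
    _ = ∑ᶠ k, (∑ i, c i * w (k - σ i)) * f k := by
        rw [sum_finsum_comm _ _ fun i _ => ?_]
        · refine finsum_congr fun k => ?_
          rw [Finset.sum_mul]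
          exact Finset.sum_congr rfl fun i _ => by ring
        · fun_prop

lemma stencil_four (c₀ c₁ c₂ c₃ : ℝ) (s₀ s₁ s₂ s₃ : ℤ) (f : ℤ → ℝ) (k : ℤ) :
    stencil ![c₀, c₁, c₂, c₃] ![s₀, s₁, s₂, s₃] f k
      = c₀ * f (k + s₀) + c₁ * f (k + s₁) + c₂ * f (k + s₂) + c₃ * f (k + s₃) := by
  simp [stencil, Fin.sum_univ_four]

end Stencil

lemma finsum_int_eq_even_add_odd {M : Type*} [AddCommMonoid M] {f : ℤ → M}
    (hf : f.HasFiniteSupport) :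
    ∑ᶠ j, f j = ∑ᶠ m, f (2 * m) + ∑ᶠ m, f (2 * m + 1) := by
  have hcover : Set.range (2 * ·) ∪ Set.range (2 * · + 1) = (Set.univ : Set ℤ) := by
    ext j
    simp only [Set.mem_union, Set.mem_range, Set.mem_univ, iff_true]
    rcases Int.even_or_odd' j with ⟨m, rfl | rfl⟩
    exacts [Or.inl ⟨m, rfl⟩, Or.inr ⟨m, rfl⟩]
  have hdisj : Disjoint (Set.range (2 * · : ℤ → ℤ)) (Set.range (2 * · + 1)) := by
    rw [Set.disjoint_left]
    rintro _ ⟨m, rfl⟩ ⟨n, h⟩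
    dsimp only at h
    omega
  rw [← finsum_mem_univ, ← hcover,
    finsum_mem_union' hdisj (hf.inter_of_right _) (hf.inter_of_right _),
    finsum_mem_range (fun m n h => by simpa using h),
    finsum_mem_range (fun m n h => by simpa using h)]

lemma finsum_intCast_mul_eq_even_add_odd {f : ℤ → ℝ} (hf : f.HasFiniteSupport) :
    ∑ᶠ j : ℤ, (j : ℝ) * f j
      = 2 * ∑ᶠ m : ℤ, (m : ℝ) * f (2 * m) + ∑ᶠ m : ℤ, (2 * m + 1 : ℝ) * f (2 * m + 1) := by
  rw [finsum_int_eq_even_add_odd (by fun_prop), mul_finsum]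
  push_cast
  simp only [mul_assoc]

noncomputable def predict42 (e : ℤ → ℝ) : ℤ → ℝ :=
  stencil ![1 / 16, -9 / 16, -9 / 16, 1 / 16] ![-1, 0, 1, 2] e

noncomputable def update42 (γ : ℤ → ℝ) : ℤ → ℝ :=
  stencil ![-1 / 32, 9 / 32, 9 / 32, -1 / 32] ![1, 0, -1, -2] γ

lemma finsum_odd_mul_add_predict42 {e o : ℤ → ℝ} (he : e.HasFiniteSupport)
    (ho : o.HasFiniteSupport) :
    ∑ᶠ m : ℤ, (2 * m + 1 : ℝ) * (o m + predict42 e m)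
      = ∑ᶠ m : ℤ, (2 * m + 1 : ℝ) * o m - 2 * ∑ᶠ m : ℤ, (m : ℝ) * e m := by
  simp only [mul_add]
  have hp : (predict42 e).HasFiniteSupport := hasFiniteSupport_stencil _ _ he
  rw [finsum_add_distrib (by fun_prop) (by fun_prop), predict42, finsum_mul_stencil _ _ _ he,
    mul_finsum, sub_eq_add_neg, ← finsum_neg_distrib]
  congr 1
  refine finsum_congr fun m => ?_
  simp only [Fin.sum_univ_four, Matrix.cons_val]
  push_cast
  ring

lemma finsum_mul_add_update42 {e γ : ℤ → ℝ} (he : e.HasFiniteSupport) (hγ : γ.HasFiniteSupport) :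
    ∑ᶠ k : ℤ, (k : ℝ) * (e k + update42 γ k)
      = ∑ᶠ k : ℤ, (k : ℝ) * e k + (1 / 4) * ∑ᶠ m : ℤ, (2 * m + 1 : ℝ) * γ m := by
  have hu : (update42 γ).HasFiniteSupport := hasFiniteSupport_stencil _ _ hγ
  simp only [mul_add]
  rw [finsum_add_distrib (by fun_prop) (by fun_prop), update42, finsum_mul_stencil _ _ _ hγ,
    mul_finsum]
  congr 1
  refine finsum_congr fun m => ?_
  simp only [Fin.sum_univ_four, Matrix.cons_val]
  push_cast
  ring

/-- Conservation of the first discrete moment across levels by the lifted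
fourth-order (4.2) interpolating wavelet. -/
theorem wavelet_4_2_conserves_first_moment
    (lam : ℤ → ℝ) (hfin : (Function.support lam).Finite)
    (γ : ℤ → ℝ)
    (hγ : ∀ m : ℤ, γ m =
      lam (2 * m + 1) + (1 / 16) * lam (2 * m - 2) - (9 / 16) * lam (2 * m)
        - (9 / 16) * lam (2 * m + 2) + (1 / 16) * lam (2 * m + 4))
    (lam' : ℤ → ℝ)
    (hlam' : ∀ k : ℤ, lam' k =
      lam (2 * k) - (1 / 32) * γ (k + 1) + (9 / 32) * γ k
        + (9 / 32) * γ (k - 1) - (1 / 32) * γ (k - 2)) :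
    ∑ᶠ j : ℤ, (j : ℝ) * lam j = 4 * ∑ᶠ k : ℤ, (k : ℝ) * lam' k := by
  have hlam : lam.HasFiniteSupport := hfin
  have heven : (fun n => lam (2 * n)).HasFiniteSupport :=
    hlam.fun_comp_of_injective fun _ _ h => by simpa using h
  have hodd : (fun n => lam (2 * n + 1)).HasFiniteSupport :=
    hlam.fun_comp_of_injective fun _ _ h => by simpa using h
  have hγ_lift : γ = fun m => lam (2 * m + 1) + predict42 (fun n => lam (2 * n)) m := by
    funext m
    rw [hγ, predict42, stencil_four]
    ring_nf
  have hlam'_lift : lam' = fun k => lam (2 * k) + update42 γ k := by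
    funext k
    rw [hlam', update42, stencil_four]
    ring_nf
  have hγfin : γ.HasFiniteSupport := by
    rw [hγ_lift]
    exact hodd.fun_add (hasFiniteSupport_stencil _ _ heven)
  rw [finsum_intCast_mul_eq_even_add_odd hlam, hlam'_lift, finsum_mul_add_update42 heven hγfin,
    hγ_lift, finsum_odd_mul_add_predict42 heven hodd]
  ring
end

section
/- Let f : ℝ → ℝ be twice continuously differentiable with bounded second derivative, let h > 0, and define λ : ℤ → ℝ by λ(j) = f(j·h). Then the coarse scaling coefficients λ' of λ under the 2.2 forward wavelet transform satisfy |λ'(k) - f(2k·h)| ≤ (1/4)·h²·sup_{t∈ℝ} |f''(t)| for every k ∈ ℤ. (For lifted interpolating wavelets the coarse scaling coefficients no longer equal the function samples, but they deviate from them by at most O(h^N) with N = 2.) -/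
/-!
The detail coefficient `γ m` is minus half the second difference of the samples at `2 m h`, which
is at most `h² · sup |f''|` in absolute value by applying the mean value inequality twice. The
lifting step adds a quarter of two neighbouring detail coefficients to the even sample, giving
`(1/4) · 2 · (1/2) · h² · sup |f''|`.
-/

open Set

theorem norm_second_difference_le {E : Type*} [NormedAddCommGroup E] [NormedSpace ℝ E]
    {f : ℝ → E} {M : ℝ} (hf : Differentiable ℝ f) (hf' : Differentiable ℝ (deriv f))
    (hM : ∀ t, ‖deriv (deriv f) t‖ ≤ M) (x h : ℝ) :
    ‖f (x + 2 * h) - (2 : ℝ) • f (x + h) + f x‖ ≤ M * h ^ 2 := by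
  have hf'_lip : ∀ a, ‖deriv f (a + h) - deriv f a‖ ≤ M * ‖h‖ := fun a => by
    simpa using convex_univ.norm_image_sub_le_of_norm_deriv_le (fun t _ => hf' t)
      (fun t _ => hM t) (mem_univ a) (mem_univ (a + h))
  let g : ℝ → E := fun t => f (t + h) - f t
  have hg : ∀ t, HasDerivAt g (deriv f (t + h) - deriv f t) t := fun t =>
    ((hf (t + h)).hasDerivAt.comp_add_const t h).sub (hf t).hasDerivAt
  have hg_diff : ‖g (x + h) - g x‖ ≤ M * ‖h‖ * ‖h‖ := by
    simpa using convex_univ.norm_image_sub_le_of_norm_deriv_le (fun t _ => (hg t).differentiableAt)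
      (fun t _ => (hg t).deriv ▸ hf'_lip t) (mem_univ x) (mem_univ (x + h))
  have hg_eq : g (x + h) - g x = f (x + 2 * h) - (2 : ℝ) • f (x + h) + f x := by
    simp only [g, two_mul, ← add_assoc, two_smul]
    abel
  rw [← hg_eq]
  simpa [mul_assoc, ← sq] using hg_diff

theorem abs_lifted_coarse_sub_even_le {lam γ lam' : ℤ → ℝ} {B : ℝ}
    (hγ : ∀ m, γ m = lam (2 * m + 1) - (1 / 2) * (lam (2 * m) + lam (2 * m + 2)))
    (hlam' : ∀ k, lam' k = lam (2 * k) + (1 / 4) * (γ (k - 1) + γ k))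
    (hB : ∀ j, |lam (j + 2) - 2 * lam (j + 1) + lam j| ≤ B) (k : ℤ) :
    |lam' k - lam (2 * k)| ≤ B / 4 := by
  have hγ_le : ∀ m, |γ m| ≤ B / 2 := fun m => by
    have hγ_eq : γ m = -(lam (2 * m + 2) - 2 * lam (2 * m + 1) + lam (2 * m)) / 2 := by
      rw [hγ]; ring
    rw [hγ_eq, abs_div, abs_neg, abs_two]
    gcongr
    exact hB (2 * m)
  calc |lam' k - lam (2 * k)| = |γ (k - 1) + γ k| / 4 := by
        rw [hlam', add_sub_cancel_left, abs_mul, abs_of_pos (by norm_num : (0 : ℝ) < 1 / 4)]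
        ring
    _ ≤ (|γ (k - 1)| + |γ k|) / 4 := by gcongr; exact abs_add_le _ _
    _ ≤ (B / 2 + B / 2) / 4 := by gcongr <;> exact hγ_le _
    _ = B / 4 := by ring

theorem wavelet_2_2_coarse_coefficients_close_to_samples_general
    (f : ℝ → ℝ) (hf : ContDiff ℝ 2 f)
    (hbdd : BddAbove (Set.range fun t : ℝ => |deriv (deriv f) t|))
    (h : ℝ)
    (lam : ℤ → ℝ) (hlam : ∀ j : ℤ, lam j = f ((j : ℝ) * h))
    (γ : ℤ → ℝ)
    (hγ : ∀ m : ℤ, γ m = lam (2 * m + 1) - (1 / 2) * (lam (2 * m) + lam (2 * m + 2)))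
    (lam' : ℤ → ℝ)
    (hlam' : ∀ k : ℤ, lam' k = lam (2 * k) + (1 / 4) * (γ (k - 1) + γ k)) :
    ∀ k : ℤ, |lam' k - f (((2 * k : ℤ) : ℝ) * h)| ≤
      (1 / 4) * h ^ 2 * ⨆ t : ℝ, |deriv (deriv f) t| := by
  set M := ⨆ t : ℝ, |deriv (deriv f) t|
  have hM : ∀ t, ‖deriv (deriv f) t‖ ≤ M := fun t => le_ciSup hbdd t
  have hf' : ContDiff ℝ 1 (deriv f) := (contDiff_succ_iff_deriv.mp hf).2.2
  have hB : ∀ j : ℤ, |lam (j + 2) - 2 * lam (j + 1) + lam j| ≤ M * h ^ 2 := fun j => by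
    simp only [hlam, Int.cast_add, Int.cast_ofNat, Int.cast_one, add_mul, one_mul]
    simpa using norm_second_difference_le (hf.differentiable (by norm_num))
      (hf'.differentiable one_ne_zero) hM (j * h) h
  intro k
  rw [← hlam, show 1 / 4 * h ^ 2 * M = M * h ^ 2 / 4 by ring]
  exact abs_lifted_coarse_sub_even_le hγ hlam' hB k

/-- For the lifted second-order (2.2) interpolating wavelet, the coarse scaling
coefficients of samples of a `C²` function with bounded second derivative
deviate from the coarse-grid function samples by at most `(1/4)·h²·sup |f''|`. -/
theorem wavelet_2_2_coarse_coefficients_close_to_samples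
    (f : ℝ → ℝ) (hf : ContDiff ℝ 2 f)
    (hbdd : BddAbove (Set.range fun t : ℝ => |deriv (deriv f) t|))
    (h : ℝ) (hh : 0 < h)
    (lam : ℤ → ℝ) (hlam : ∀ j : ℤ, lam j = f ((j : ℝ) * h))
    (γ : ℤ → ℝ)
    (hγ : ∀ m : ℤ, γ m = lam (2 * m + 1) - (1 / 2) * (lam (2 * m) + lam (2 * m + 2)))
    (lam' : ℤ → ℝ)
    (hlam' : ∀ k : ℤ, lam' k = lam (2 * k) + (1 / 4) * (γ (k - 1) + γ k)) :
    ∀ k : ℤ, |lam' k - f (((2 * k : ℤ) : ℝ) * h)| ≤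
      (1 / 4) * h ^ 2 * ⨆ t : ℝ, |deriv (deriv f) t| :=
  wavelet_2_2_coarse_coefficients_close_to_samples_general f hf hbdd h lam hlam γ hγ lam' hlam'
end
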